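/- Let G be a countable group and K ≤ G a subgroup. In the weak* topology on Borel probability measures on Sub(G), the intersectional IRSs λ_{p,K} satisfy: λ_{p,K} → δ_{Core_∅(K)} as p → 0, and λ_{p,K} → δ_{Core_G(K)} as p → 1. -/

import Mathlib

/-!
Since the Chabauty topology is generated by the sets `{H | g ∈ H}` and their complements, a
family of probability measures on `Sub(G)` converges weakly to `δ_{H₀}` as soon as, for each
`g`, the event `g ∈ H ↔ g ∈ H₀` has probability tending to `1`.

For the random subgroup `Core_A(K)` this is a computation with one element `g` at a time.
If `‖g‖_K = n < ∞`, then `g ∉ Core_A(K)` forces `A` to meet the `n` cosets `θ` with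
`g ∉ K^θ`, which has probability at most `n p`; this tends to `0` as `p → 0`, and vanishes
when `n = 0`, i.e. `g ∈ Core_G(K)`. If `‖g‖_K = ∞`, then `g ∈ Core_A(K)` forces `A` to avoid
infinitely many independent cosets, which has probability `0` for every `p > 0`. If
`g ∉ Core_G(K)`, then `g ∈ Core_A(K)` forces `A` to avoid one coset, which has probability
`1 - p → 0` as `p → 1`.
-/

open Filter MeasureTheory
open scoped ENNReal Topology

noncomputable section

namespace Paper

variable {G : Type*} [Group G]

/-- Conjugation on subgroups: `conjSubgroup g K = g K g⁻¹`. -/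
def conjSubgroup (g : G) (K : Subgroup G) : Subgroup G :=
  K.map (MulAut.conj g).toMonoidHom

lemma mem_conjSubgroup {g x : G} {K : Subgroup G} :
    x ∈ conjSubgroup g K ↔ g⁻¹ * x * g ∈ K := by
  constructor
  · rintro ⟨y, hy, rfl⟩
    simpa [MulAut.conj_apply, mul_assoc] using hy
  · intro h
    exact ⟨g⁻¹ * x * g, h, by simp [MulAut.conj_apply]; group⟩

lemma conjSubgroup_conjSubgroup (a b : G) (K : Subgroup G) :
    conjSubgroup a (conjSubgroup b K) = conjSubgroup (a * b) K := by
  ext x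
  simp only [mem_conjSubgroup]
  have e : b⁻¹ * (a⁻¹ * x * a) * b = (a * b)⁻¹ * x * (a * b) := by group
  rw [e]

lemma conjSubgroup_eq_of_mem_normalizer {n : G} {K : Subgroup G}
    (hn : n ∈ Subgroup.normalizer (K : Set G)) : conjSubgroup n K = K := by
  ext x
  rw [mem_conjSubgroup]
  exact (Subgroup.mem_normalizer_iff''.mp hn x).symm

/-- `Θ = Θ_G(K)`: the set of right cosets of the normalizer of `K` in `G`. -/
abbrev NormCoset (K : Subgroup G) := Quotient (QuotientGroup.rightRel (Subgroup.normalizer (K : Set G)))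

/-- The conjugate `K^θ = g⁻¹ K g` for `θ = N_G(K)·g ∈ Θ` (it does not depend on the
chosen representative of the coset). -/
def conjCoset (K : Subgroup G) (θ : NormCoset K) : Subgroup G :=
  conjSubgroup θ.out⁻¹ K

lemma conjSubgroup_inv_eq_of_rel {a b : G} {K : Subgroup G}
    (h : QuotientGroup.rightRel (Subgroup.normalizer (K : Set G)) a b) :
    conjSubgroup a⁻¹ K = conjSubgroup b⁻¹ K := by
  rw [QuotientGroup.rightRel_apply] at h
  have e : conjSubgroup a⁻¹ K = conjSubgroup (b⁻¹ * (b * a⁻¹)) K := by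
    congr 1; group
  rw [e, ← conjSubgroup_conjSubgroup, conjSubgroup_eq_of_mem_normalizer h]

lemma conjCoset_mk (K : Subgroup G) (a : G) :
    conjCoset K (Quotient.mk (QuotientGroup.rightRel (Subgroup.normalizer (K : Set G))) a) =
      conjSubgroup a⁻¹ K := by
  apply conjSubgroup_inv_eq_of_rel
  exact Quotient.mk_out (s := QuotientGroup.rightRel (Subgroup.normalizer (K : Set G))) a

/-- The right action of `G` on `Θ`. -/
def shift (K : Subgroup G) (θ : NormCoset K) (g : G) : NormCoset K :=
  Quotient.mk (QuotientGroup.rightRel (Subgroup.normalizer (K : Set G))) (θ.out * g)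

lemma rel_mul {K : Subgroup G} {a b : G} (h : QuotientGroup.rightRel (Subgroup.normalizer (K : Set G)) a b)
    (g : G) : QuotientGroup.rightRel (Subgroup.normalizer (K : Set G)) (a * g) (b * g) := by
  rw [QuotientGroup.rightRel_apply] at h ⊢
  have e : b * g * (a * g)⁻¹ = b * a⁻¹ := by group
  rw [e]; exact h

lemma shift_mk (K : Subgroup G) (a g : G) :
    shift K (Quotient.mk (QuotientGroup.rightRel (Subgroup.normalizer (K : Set G))) a) g =
      Quotient.mk (QuotientGroup.rightRel (Subgroup.normalizer (K : Set G))) (a * g) := by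
  apply Quotient.sound
  exact rel_mul (Quotient.mk_out (s := QuotientGroup.rightRel (Subgroup.normalizer (K : Set G))) a) g

lemma shift_shift (K : Subgroup G) (θ : NormCoset K) (g h : G) :
    shift K (shift K θ g) h = shift K θ (g * h) := by
  induction θ using Quotient.inductionOn with
  | h a => rw [shift_mk, shift_mk, shift_mk, mul_assoc]

lemma shift_one (K : Subgroup G) (θ : NormCoset K) : shift K θ 1 = θ := by
  induction θ using Quotient.inductionOn with
  | h a => rw [shift_mk, mul_one]

lemma shift_injective (K : Subgroup G) (g : G) :
    Function.Injective (fun θ : NormCoset K => shift K θ g) := by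
  intro θ₁ θ₂ h
  have h2 := congrArg (fun θ : NormCoset K => shift K θ g⁻¹) h
  simpa [shift_shift, shift_one] using h2

lemma conjCoset_shift (K : Subgroup G) (θ : NormCoset K) (g : G) :
    conjCoset K (shift K θ g) = conjSubgroup g⁻¹ (conjCoset K θ) := by
  induction θ using Quotient.inductionOn with
  | h a =>
    rw [shift_mk, conjCoset_mk, conjCoset_mk, conjSubgroup_conjSubgroup]
    congr 1
    group

/-- `‖g‖_K = #{θ ∈ Θ : g ∉ K^θ} ∈ ℕ ∪ {∞}`. -/
def normOf (K : Subgroup G) (g : G) : ℕ∞ :=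
  {θ : NormCoset K | g ∉ conjCoset K θ}.encard

/-- `Core_∅(K) = {g : ‖g‖_K < ∞}`, as a subgroup of `G`. -/
def emptyCore (K : Subgroup G) : Subgroup G where
  carrier := {g | normOf K g < ⊤}
  one_mem' := by
    have h : {θ : NormCoset K | (1 : G) ∉ conjCoset K θ} = ∅ := by
      ext θ; simp [Subgroup.one_mem]
    simp [normOf, Set.mem_setOf_eq, h]
  mul_mem' := by
    intro a b ha hb
    simp only [Set.mem_setOf_eq, normOf] at ha hb ⊢
    have hsub : {θ : NormCoset K | a * b ∉ conjCoset K θ} ⊆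
        {θ : NormCoset K | a ∉ conjCoset K θ} ∪ {θ : NormCoset K | b ∉ conjCoset K θ} := by
      intro θ hθ
      by_contra hc
      simp only [Set.mem_union, Set.mem_setOf_eq, not_or, not_not] at hc
      exact hθ (mul_mem hc.1 hc.2)
    calc {θ : NormCoset K | a * b ∉ conjCoset K θ}.encard
        ≤ ({θ : NormCoset K | a ∉ conjCoset K θ} ∪
            {θ : NormCoset K | b ∉ conjCoset K θ}).encard := Set.encard_mono hsub
      _ ≤ _ + _ := Set.encard_union_le _ _
      _ < ⊤ := WithTop.add_lt_top.mpr ⟨ha, hb⟩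
  inv_mem' := by
    intro a ha
    have h : {θ : NormCoset K | a⁻¹ ∉ conjCoset K θ} =
        {θ : NormCoset K | a ∉ conjCoset K θ} := by
      ext θ; simp
    simpa only [Set.mem_setOf_eq, normOf, h] using ha

lemma mem_emptyCore {K : Subgroup G} {g : G} :
    g ∈ emptyCore K ↔ normOf K g < ⊤ := Iff.rfl

/-- `Core_∅(K)` is a normal subgroup of `G`. -/
instance emptyCore_normal (K : Subgroup G) : (emptyCore K).Normal := by
  constructor
  intro n hn g
  rw [mem_emptyCore] at hn ⊢
  rw [normOf, Set.encard_lt_top_iff] at hn ⊢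
  have hset : {θ : NormCoset K | g * n * g⁻¹ ∉ conjCoset K θ} =
      (fun θ : NormCoset K => shift K θ g) ⁻¹' {θ : NormCoset K | n ∉ conjCoset K θ} := by
    ext θ
    simp only [Set.mem_setOf_eq, Set.mem_preimage, conjCoset_shift, mem_conjSubgroup]
    have e : g⁻¹⁻¹ * n * g⁻¹ = g * n * g⁻¹ := by group
    rw [e]
  rw [hset]
  exact Set.Finite.preimage (Set.injOn_of_injective (shift_injective K g)) hn

variable {G₀ : Type*} [Group G₀]

/-- The Borel σ-algebra of the Chabauty topology on the space of subgroups of a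
countable group: it is generated by the sets `{K : g ∈ K}`, `g ∈ G`. -/
instance subgroupMeasurableSpace : MeasurableSpace (Subgroup G₀) :=
  MeasurableSpace.generateFrom {s | ∃ g : G₀, s = {K : Subgroup G₀ | g ∈ K}}

/-- A probability space carrying a product-Bernoulli(`p`) random subset of
`Θ = Θ_G(K)`, encoded by independent `{0,1}`-valued random variables `X θ` with
`P[X θ = 1] = p`. -/
structure BernoulliSetup {G : Type*} [Group G] (K : Subgroup G) (p : ℝ) where
  Ω : Type
  mΩ : MeasurableSpace Ω
  P : @Measure Ω mΩ
  prob : @IsProbabilityMeasure Ω mΩ P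
  X : NormCoset K → Ω → Bool
  meas : ∀ θ, @Measurable Ω Bool mΩ _ (X θ)
  bernoulli : ∀ θ, P {ω | X θ ω = true} = ENNReal.ofReal p
  indep : @ProbabilityTheory.iIndepFun Ω (NormCoset K) mΩ (fun _ => Bool)
    (fun _ => inferInstance) X P

/-- The law of the intersectional random subgroup
`Core_A(K) = ⋂_{θ ∈ A} K^θ`, where `A = {θ : X θ = 1}` is the Bernoulli-`p` random
subset of `Θ` encoded by the setup `s`. -/
def BernoulliSetup.law {G : Type*} [Group G] {K : Subgroup G} {p : ℝ}
    (s : BernoulliSetup K p) : Measure (Subgroup G) :=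
  @Measure.map s.Ω (Subgroup G) s.mΩ _ (fun ω => ⨅ θ ∈ {θ | s.X θ ω = true}, conjCoset K θ) s.P

/-- `ν` is the intersectional IRS `λ_{p,K}`: the law of `Core_A(K)` for a
product-Bernoulli(`p`) random subset `A ⊆ Θ`. -/
def IsIntersectionalIRS {G : Type*} [Group G] (K : Subgroup G) (p : ℝ)
    (ν : Measure (Subgroup G)) : Prop :=
  IsProbabilityMeasure ν ∧ ∃ s : BernoulliSetup K p, ν = s.law

/-- The Chabauty topology on the space of subgroups of a countable (discrete) group:
pointwise convergence of indicator functions. -/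
instance chabautyTopology {G : Type*} [Group G] : TopologicalSpace (Subgroup G) :=
  TopologicalSpace.generateFrom
    {s | ∃ g : G, s = {K : Subgroup G | g ∈ K} ∨ s = {K : Subgroup G | g ∉ K}}

section Concentration

variable {ι X : Type*} [MeasurableSpace X]

/-- `concentrationFilter μ L ≤ 𝓝 x` says that `μ i` concentrates at `x` along `L`. -/
def concentrationFilter (μ : ι → Measure X) (L : Filter ι) : Filter X where
  sets := {U | Tendsto (fun i => μ i Uᶜ) L (𝓝 0)}
  univ_sets := by simpa using tendsto_const_nhds
  sets_of_superset hU hUV :=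
    tendsto_of_tendsto_of_tendsto_of_le_of_le tendsto_const_nhds hU (fun _ => zero_le)
      fun _ => measure_mono (Set.compl_subset_compl.2 hUV)
  inter_sets hU hV := by
    refine tendsto_of_tendsto_of_tendsto_of_le_of_le tendsto_const_nhds
      (by simpa using hU.add hV) (fun _ => zero_le) fun i => ?_
    rw [Set.compl_inter]
    exact measure_union_le _ _

lemma mem_concentrationFilter {μ : ι → Measure X} {L : Filter ι} {U : Set X} :
    U ∈ concentrationFilter μ L ↔ Tendsto (fun i => μ i Uᶜ) L (𝓝 0) := Iff.rfl

variable [TopologicalSpace X] [OpensMeasurableSpace X]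

lemma dist_integral_le_of_forall_mem_dist_le {μ : Measure X} [IsProbabilityMeasure μ]
    (f : BoundedContinuousFunction X ℝ) {x₀ : X} {U : Set X} (hU : MeasurableSet U)
    {ε : ℝ} (hε : 0 ≤ ε) (hfU : ∀ x ∈ U, dist (f x) (f x₀) ≤ ε) :
    dist (∫ x, f x ∂μ) (f x₀) ≤ ε + 2 * ‖f‖ * μ.real Uᶜ := by
  have hpoint : ∀ x, ‖f x - f x₀‖ ≤ ε + Uᶜ.indicator (fun _ => 2 * ‖f‖) x := by
    intro x
    rw [← dist_eq_norm]
    by_cases hx : x ∈ U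
    · simpa [hx] using hfU x hx
    · simpa [hx] using (f.dist_le_two_norm x x₀).trans (le_add_of_nonneg_left hε)
  calc dist (∫ x, f x ∂μ) (f x₀) = ‖∫ x, (f x - f x₀) ∂μ‖ := by
        rw [dist_eq_norm, integral_sub (f.integrable μ) (integrable_const _)]
        simp
    _ ≤ ∫ x, ‖f x - f x₀‖ ∂μ := norm_integral_le_integral_norm _
    _ ≤ ∫ x, (ε + Uᶜ.indicator (fun _ => 2 * ‖f‖) x) ∂μ :=
        integral_mono ((f.integrable μ).sub (integrable_const _)).norm
          ((integrable_const _).add ((integrable_const _).indicator hU.compl)) hpoint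
    _ = ε + 2 * ‖f‖ * μ.real Uᶜ := by
        rw [integral_add (integrable_const _) ((integrable_const _).indicator hU.compl),
          integral_indicator_const _ hU.compl]
        simp [mul_comm]

theorem tendsto_integral_of_concentrationFilter_le_nhds {μ : ι → Measure X} {L : Filter ι}
    (hμ : ∀ᶠ i in L, IsProbabilityMeasure (μ i)) {x₀ : X}
    (hx₀ : concentrationFilter μ L ≤ 𝓝 x₀) (f : BoundedContinuousFunction X ℝ) :
    Tendsto (fun i => ∫ x, f x ∂μ i) L (𝓝 (f x₀)) := by
  refine Metric.tendsto_nhds.2 fun ε hε => ?_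
  set U := f ⁻¹' Metric.ball (f x₀) (ε / 2)
  have hU : U ∈ 𝓝 x₀ := f.continuous.continuousAt (Metric.ball_mem_nhds _ (half_pos hε))
  have hUc : Tendsto (fun i => 2 * ‖f‖ * (μ i).real Uᶜ) L (𝓝 0) := by
    have hμU := mem_concentrationFilter.1 (hx₀ hU)
    simpa [measureReal_def] using
      ((ENNReal.tendsto_toReal ENNReal.zero_ne_top).comp hμU).const_mul (2 * ‖f‖)
  filter_upwards [hμ, hUc.eventually (gt_mem_nhds (half_pos hε))] with i hi hsmall
  calc dist (∫ x, f x ∂μ i) (f x₀) ≤ ε / 2 + 2 * ‖f‖ * (μ i).real Uᶜ :=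
        dist_integral_le_of_forall_mem_dist_le f
          (f.continuous.measurable measurableSet_ball) (half_pos hε).le
          fun x hx => (Metric.mem_ball.1 hx).le
    _ < ε := by linarith

end Concentration

lemma measurableSet_setOf_mem (g : G) : MeasurableSet {H : Subgroup G | g ∈ H} :=
  MeasurableSpace.measurableSet_generateFrom ⟨g, rfl⟩

lemma countable_chabautySubbasis [Countable G] :
    {s : Set (Subgroup G) | ∃ g : G, s = {H | g ∈ H} ∨ s = {H | g ∉ H}}.Countable := by
  refine ((Set.countable_range fun g : G => {H : Subgroup G | g ∈ H}).union
    (Set.countable_range fun g : G => {H : Subgroup G | g ∉ H})).mono ?_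
  rintro s ⟨g, rfl | rfl⟩
  exacts [Or.inl ⟨g, rfl⟩, Or.inr ⟨g, rfl⟩]

instance [Countable G] : SecondCountableTopology (Subgroup G) :=
  TopologicalSpace.SecondCountableTopology.mk' countable_chabautySubbasis

instance [Countable G] : BorelSpace (Subgroup G) where
  measurable_eq := by
    rw [borel_eq_generateFrom_of_subbasis rfl]
    refine le_antisymm
      (MeasurableSpace.generateFrom_mono fun s ⟨g, hs⟩ => ⟨g, Or.inl hs⟩)
      (MeasurableSpace.generateFrom_le ?_)
    rintro s ⟨g, rfl | rfl⟩
    · exact measurableSet_setOf_mem g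
    · exact (measurableSet_setOf_mem g).compl

lemma le_nhds_of_forall_setOf_mem {F : Filter (Subgroup G)} {H₀ : Subgroup G}
    (hmem : ∀ g ∈ H₀, {H : Subgroup G | g ∈ H} ∈ F)
    (hnotMem : ∀ g ∉ H₀, {H : Subgroup G | g ∉ H} ∈ F) : F ≤ 𝓝 H₀ := by
  rw [TopologicalSpace.nhds_generateFrom]
  refine le_iInf₂ fun s ⟨hH₀, g, hs⟩ => le_principal_iff.2 ?_
  rcases hs with rfl | rfl
  exacts [hmem g hH₀, hnotMem g hH₀]

lemma mem_emptyCore_iff_finite {K : Subgroup G} {g : G} :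
    g ∈ emptyCore K ↔ {θ : NormCoset K | g ∉ conjCoset K θ}.Finite := by
  rw [mem_emptyCore, normOf, Set.encard_lt_top_iff]

lemma mem_normalCore_iff_forall_mem_conjCoset {K : Subgroup G} {g : G} :
    g ∈ K.normalCore ↔ ∀ θ : NormCoset K, g ∈ conjCoset K θ := by
  refine ⟨fun h θ => ?_, fun h a => ?_⟩
  · induction θ using Quotient.inductionOn with
    | h a => rw [conjCoset_mk, mem_conjSubgroup, inv_inv]; exact h a
  · simpa [conjCoset_mk, mem_conjSubgroup] using
      h (Quotient.mk (QuotientGroup.rightRel (Subgroup.normalizer (K : Set G))) a)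

namespace BernoulliSetup

attribute [local instance] BernoulliSetup.mΩ BernoulliSetup.prob

variable {K : Subgroup G} {p : ℝ} (s : BernoulliSetup K p)

def core (ω : s.Ω) : Subgroup G :=
  ⨅ θ ∈ {θ | s.X θ ω = true}, conjCoset K θ

variable {s}

lemma mem_core {ω : s.Ω} {g : G} :
    g ∈ s.core ω ↔ ∀ θ, s.X θ ω = true → g ∈ conjCoset K θ := by
  simp [core, Subgroup.mem_iInf]

lemma X_eq_false_of_mem_core {ω : s.Ω} {g : G} {θ : NormCoset K} (hg : g ∈ s.core ω)
    (hθ : g ∉ conjCoset K θ) : s.X θ ω = false :=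
  Bool.eq_false_iff.2 fun h => hθ (mem_core.1 hg θ h)

variable (s)

lemma measurable_core [Countable G] : Measurable s.core := by
  refine measurable_generateFrom ?_
  rintro t ⟨g, rfl⟩
  have hpre :
      s.core ⁻¹' {H | g ∈ H} = ⋂ θ ∈ {θ | g ∉ conjCoset K θ}, {ω | s.X θ ω = false} := by
    ext ω
    simp only [Set.mem_preimage, Set.mem_ofPred_eq, Set.mem_iInter, mem_core]
    refine ⟨fun h θ hθ => Bool.eq_false_iff.2 fun hX => hθ (h θ hX), fun h θ hX => ?_⟩
    by_contra hθ
    simp [h θ hθ] at hX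
  rw [hpre]
  exact MeasurableSet.biInter (Set.to_countable _) fun θ _ => s.meas θ (measurableSet_singleton _)

lemma law_apply [Countable G] {t : Set (Subgroup G)} (ht : MeasurableSet t) :
    s.law t = s.P (s.core ⁻¹' t) :=
  Measure.map_apply s.measurable_core ht

lemma measure_X_eq_false (θ : NormCoset K) :
    s.P {ω | s.X θ ω = false} = 1 - ENNReal.ofReal p := by
  have hmeas : MeasurableSet {ω | s.X θ ω = true} := s.meas θ (measurableSet_singleton _)
  have : {ω | s.X θ ω = false} = {ω | s.X θ ω = true}ᶜ := by ext; simp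
  rw [this, prob_compl_eq_one_sub hmeas, s.bernoulli]

lemma measure_forall_X_eq_false (T : Finset (NormCoset K)) :
    s.P {ω | ∀ θ ∈ T, s.X θ ω = false} = (1 - ENNReal.ofReal p) ^ T.card := by
  have : {ω | ∀ θ ∈ T, s.X θ ω = false} = ⋂ θ ∈ T, s.X θ ⁻¹' {false} := by ext; simp
  rw [this, s.indep.measure_inter_preimage_eq_mul T fun _ _ => measurableSet_singleton _]
  simp_rw [Set.preimage, Set.mem_singleton_iff, s.measure_X_eq_false, Finset.prod_const]

lemma measure_notMem_core_le {g : G} (hfin : {θ : NormCoset K | g ∉ conjCoset K θ}.Finite) :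
    s.P {ω | g ∉ s.core ω} ≤ hfin.toFinset.card * ENNReal.ofReal p := by
  have hsub : {ω | g ∉ s.core ω} ⊆ ⋃ θ ∈ hfin.toFinset, {ω | s.X θ ω = true} := by
    intro ω hω
    obtain ⟨θ, hX, hθ⟩ := by simpa [mem_core] using hω
    exact Set.mem_biUnion (hfin.mem_toFinset.2 hθ) hX
  calc s.P {ω | g ∉ s.core ω} ≤ ∑ θ ∈ hfin.toFinset, s.P {ω | s.X θ ω = true} :=
        (measure_mono hsub).trans (measure_biUnion_finset_le _ _)
    _ = hfin.toFinset.card * ENNReal.ofReal p := by simp [s.bernoulli]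

lemma measure_notMem_core_eq_zero {g : G} (hg : g ∈ K.normalCore) :
    s.P {ω | g ∉ s.core ω} = 0 := by
  have : {ω | g ∉ s.core ω} = ∅ :=
    Set.eq_empty_of_forall_notMem fun ω hω =>
      hω (mem_core.2 fun θ _ => mem_normalCore_iff_forall_mem_conjCoset.1 hg θ)
  rw [this, measure_empty]

/-- An element moved by infinitely many conjugates survives in `Core_A(K)` only if `A` misses
all of them, an event of probability `(1 - p) ^ N` for every `N`. -/
lemma measure_mem_core_eq_zero (hp : 0 < p) {g : G}
    (hinf : {θ : NormCoset K | g ∉ conjCoset K θ}.Infinite) :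
    s.P {ω | g ∈ s.core ω} = 0 := by
  have hq : 1 - ENNReal.ofReal p < 1 :=
    ENNReal.sub_lt_self ENNReal.one_ne_top one_ne_zero (ENNReal.ofReal_pos.2 hp).ne'
  refine le_antisymm (ge_of_tendsto' (ENNReal.tendsto_pow_atTop_nhds_zero_of_lt_one hq)
    fun N => ?_) zero_le
  obtain ⟨T, hT, rfl⟩ := hinf.exists_subset_card_eq N
  rw [← s.measure_forall_X_eq_false T]
  exact measure_mono fun ω hω θ hθ => X_eq_false_of_mem_core hω (hT hθ)

lemma measure_mem_core_le {g : G} (hg : g ∉ K.normalCore) :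
    s.P {ω | g ∈ s.core ω} ≤ 1 - ENNReal.ofReal p := by
  obtain ⟨θ, hθ⟩ : ∃ θ, g ∉ conjCoset K θ := by
    simpa [mem_normalCore_iff_forall_mem_conjCoset] using hg
  rw [← s.measure_X_eq_false θ]
  exact measure_mono fun ω hω => X_eq_false_of_mem_core hω hθ

end BernoulliSetup

section Limits

variable [Countable G] {K : Subgroup G} {ν : ℝ → Measure (Subgroup G)}

lemma mem_concentrationFilter_of_forall_le {L : Filter ℝ}
    (hν : ∀ p ∈ Set.Ioo (0 : ℝ) 1, IsIntersectionalIRS K p (ν p))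
    (hL : ∀ᶠ p in L, p ∈ Set.Ioo (0 : ℝ) 1) {t : Set (Subgroup G)} (ht : MeasurableSet t)
    {b : ℝ → ℝ≥0∞} (hb : Tendsto b L (𝓝 0))
    (hbound : ∀ p ∈ Set.Ioo (0 : ℝ) 1, ∀ s : BernoulliSetup K p, s.P (s.core ⁻¹' tᶜ) ≤ b p) :
    t ∈ concentrationFilter ν L := by
  refine tendsto_of_tendsto_of_tendsto_of_le_of_le' tendsto_const_nhds hb
    (Eventually.of_forall fun _ => zero_le) ?_
  filter_upwards [hL] with p hp
  obtain ⟨-, s, hs⟩ := hν p hp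
  rw [hs, s.law_apply ht.compl]
  exact hbound p hp s

lemma concentrationFilter_le_nhds_emptyCore
    (hν : ∀ p ∈ Set.Ioo (0 : ℝ) 1, IsIntersectionalIRS K p (ν p)) :
    concentrationFilter ν (𝓝[Set.Ioo (0 : ℝ) 1] 0) ≤ 𝓝 (emptyCore K) := by
  have hL : ∀ᶠ p in 𝓝[Set.Ioo (0 : ℝ) 1] 0, p ∈ Set.Ioo (0 : ℝ) 1 := self_mem_nhdsWithin
  refine le_nhds_of_forall_setOf_mem (fun g hg => ?_) (fun g hg => ?_)
  · have hfin := mem_emptyCore_iff_finite.1 hg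
    have hp : Tendsto ENNReal.ofReal (𝓝[Set.Ioo (0 : ℝ) 1] 0) (𝓝 0) := by
      simpa using (ENNReal.continuous_ofReal.tendsto 0).mono_left nhdsWithin_le_nhds
    refine mem_concentrationFilter_of_forall_le hν hL (measurableSet_setOf_mem g)
      (by simpa using ENNReal.Tendsto.const_mul hp (.inr (ENNReal.natCast_ne_top
        hfin.toFinset.card))) fun p _ s => ?_
    simpa [Set.compl_ofPred] using s.measure_notMem_core_le hfin
  · have hinf : {θ : NormCoset K | g ∉ conjCoset K θ}.Infinite :=
      fun h => hg (mem_emptyCore_iff_finite.2 h)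
    refine mem_concentrationFilter_of_forall_le hν hL (measurableSet_setOf_mem g).compl
      tendsto_const_nhds fun p hp s => ?_
    simpa [Set.compl_ofPred] using (s.measure_mem_core_eq_zero hp.1 hinf).le

lemma concentrationFilter_le_nhds_normalCore
    (hν : ∀ p ∈ Set.Ioo (0 : ℝ) 1, IsIntersectionalIRS K p (ν p)) :
    concentrationFilter ν (𝓝[Set.Ioo (0 : ℝ) 1] 1) ≤ 𝓝 K.normalCore := by
  have hL : ∀ᶠ p in 𝓝[Set.Ioo (0 : ℝ) 1] 1, p ∈ Set.Ioo (0 : ℝ) 1 := self_mem_nhdsWithin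
  refine le_nhds_of_forall_setOf_mem (fun g hg => ?_) (fun g hg => ?_)
  · refine mem_concentrationFilter_of_forall_le hν hL (measurableSet_setOf_mem g)
      tendsto_const_nhds fun p _ s => ?_
    simpa [Set.compl_ofPred] using (s.measure_notMem_core_eq_zero hg).le
  · have hp : Tendsto (fun p => 1 - ENNReal.ofReal p) (𝓝[Set.Ioo (0 : ℝ) 1] 1) (𝓝 0) := by
      have hofReal : Tendsto ENNReal.ofReal (𝓝[Set.Ioo (0 : ℝ) 1] 1) (𝓝 1) := by
        simpa using (ENNReal.continuous_ofReal.tendsto 1).mono_left nhdsWithin_le_nhds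
      simpa using ENNReal.Tendsto.sub tendsto_const_nhds hofReal (.inl ENNReal.one_ne_top)
    refine mem_concentrationFilter_of_forall_le hν hL (measurableSet_setOf_mem g).compl hp
      fun p _ s => ?_
    simpa [Set.compl_ofPred] using s.measure_mem_core_le hg

end Limits

/-- **Proposition 2.2.** In the weak* topology, the intersectional IRSs `λ_{p,K}`
converge to `δ_{Core_∅(K)}` as `p → 0` and to `δ_{Core_G(K)}` as `p → 1`:
tested against any bounded continuous function `f` on `Sub(G)`, the integrals converge
to the corresponding point evaluations. -/
theorem intersectional_IRS_weak_limits {G : Type*} [Group G] [Countable G]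
    (K : Subgroup G) (ν : ℝ → Measure (Subgroup G))
    (hν : ∀ p ∈ Set.Ioo (0 : ℝ) 1, IsIntersectionalIRS K p (ν p)) :
    (∀ f : BoundedContinuousFunction (Subgroup G) ℝ,
      Tendsto (fun p => ∫ H, f H ∂(ν p)) (𝓝[Set.Ioo (0 : ℝ) 1] 0)
        (𝓝 (f (emptyCore K)))) ∧
    (∀ f : BoundedContinuousFunction (Subgroup G) ℝ,
      Tendsto (fun p => ∫ H, f H ∂(ν p)) (𝓝[Set.Ioo (0 : ℝ) 1] 1)
        (𝓝 (f K.normalCore))) := by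
  have hprob (c : ℝ) : ∀ᶠ p in 𝓝[Set.Ioo (0 : ℝ) 1] c, IsProbabilityMeasure (ν p) :=
    eventually_nhdsWithin_of_forall fun p hp => (hν p hp).1
  exact ⟨tendsto_integral_of_concentrationFilter_le_nhds (hprob 0)
      (concentrationFilter_le_nhds_emptyCore hν),
    tendsto_integral_of_concentrationFilter_le_nhds (hprob 1)
      (concentrationFilter_le_nhds_normalCore hν)⟩

end Paper
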